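/- The conditional relative entropy is strictly convex in its first argument: for p_a, p_b, q ∈ 𝒫̃ with p_a ≠ p_b and λ ∈ (0,1), setting p_λ = λp_a + (1−λ)p_b ∈ 𝒫̃, one has D_c(p_λ‖q) < λ·D_c(p_a‖q) + (1−λ)·D_c(p_b‖q). -/

import Mathlib

open Finset

/-- The four-letter alphabet 𝒳. -/
abbrev X : Type := Fin 4
/-- Triples over 𝒳 (third-order states). -/
abbrev X3 : Type := X × X × X
/-- Quadruples over 𝒳 (tetranucleotides). -/
abbrev X4 : Type := X × X × X × X

/-- Append a letter `b` to a triple `a`, giving the 4-tuple `ab`. -/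
def appX (a : X3) (b : X) : X4 := (a.1, a.2.1, a.2.2, b)

/-- Prepend a letter `b` to a triple `a`, giving the 4-tuple `ba`. -/
def prepX (b : X) (a : X3) : X4 := (b, a.1, a.2.1, a.2.2)

/-- Third-order marginal `p(a) = ∑_b p(ab)`. -/
noncomputable def marg3 (p : X4 → ℝ) (a : X3) : ℝ := ∑ b : X, p (appX a b)

/-- Conditional probability `p(b|a) = p(ab) / p(a)`. -/
noncomputable def condProb (p : X4 → ℝ) (a : X3) (b : X) : ℝ := p (appX a b) / marg3 p a

/-- Membership in 𝒫̃: strictly positive probability distribution on 𝒳⁴ satisfying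
the consistency condition `∑_b p(ab) = ∑_b p(ba)` for all `a ∈ 𝒳³`. -/
structure MemP (p : X4 → ℝ) : Prop where
  pos : ∀ c : X4, 0 < p c
  sum_one : ∑ c : X4, p c = 1
  consistent : ∀ a : X3, (∑ b : X, p (appX a b)) = ∑ b : X, p (prepX b a)

/-- A probability distribution on 𝒳⁴. -/
def IsDist (p : X4 → ℝ) : Prop := (∀ c : X4, 0 ≤ p c) ∧ ∑ c : X4, p c = 1

/-- Conditional relative entropy `D_c(p‖q) = ∑_{a,b} p(ab) log₂ (p(b|a)/q(b|a))`. -/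
noncomputable def Dc (p q : X4 → ℝ) : ℝ :=
  ∑ a : X3, ∑ b : X, p (appX a b) * Real.logb 2 (condProb p a b / condProb q a b)

/-- Conditional entropy `H_c(p) = -∑_{a,b} p(ab) log₂ p(b|a)`. -/
noncomputable def Hc (p : X4 → ℝ) : ℝ :=
  - ∑ a : X3, ∑ b : X, p (appX a b) * Real.logb 2 (condProb p a b)

/-- Chernoff information
`C(p₁,p₂) = inf { D_c(p‖p₁) : p ∈ 𝒫̃, D_c(p‖p₁) = D_c(p‖p₂) }`. -/
noncomputable def Chernoff (p₁ p₂ : X4 → ℝ) : ℝ :=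
  sInf {x : ℝ | ∃ p : X4 → ℝ, MemP p ∧ Dc p p₁ = Dc p p₂ ∧ x = Dc p p₁}

/-- ℓ₁ distance between distributions on 𝒳⁴. -/
noncomputable def l1dist (p q : X4 → ℝ) : ℝ := ∑ c : X4, |p c - q c|

/-- Cyclic indexing of a length-`L` sequence by an arbitrary natural. -/
def cyc {L : ℕ} (x : Fin L → X) (i : ℕ) : X :=
  if h : 0 < L then x ⟨i % L, Nat.mod_lt i h⟩ else 0

/-- The cyclic empirical fourth-order distribution (type) `p̂_x` of a sequence `x ∈ 𝒳^L`:
`p̂_x(c) = (1/L)·#{i : (x_i,x_{i+1},x_{i+2},x_{i+3}) = c}`, indices mod `L`. -/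
noncomputable def empDist {L : ℕ} (x : Fin L → X) (c : X4) : ℝ :=
  (((Finset.range L).filter
      (fun i => (cyc x i, cyc x (i+1), cyc x (i+2), cyc x (i+3)) = c)).card : ℝ) / L

/-- The stationary third-order Markov law on 𝒳^L:
`P_q^{(L)}(x) = q(x₁x₂x₃)·∏_{i=4}^{L} q(x_i | x_{i-3}x_{i-2}x_{i-1})` (0-indexed here). -/
noncomputable def markovLaw (q : X4 → ℝ) {L : ℕ} (x : Fin L → X) : ℝ :=
  marg3 q (cyc x 0, cyc x 1, cyc x 2) *
    ∏ i ∈ Finset.Ico 3 L,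
      condProb q (cyc x (i-3), cyc x (i-2), cyc x (i-1)) (cyc x i)

/-- The cyclic Markov likelihood
`q̃^{(L)}(x) = q(x₁x₂x₃)·∏_{i=1}^{L} q(x_{i+3} | x_i x_{i+1} x_{i+2})`, indices mod `L`. -/
noncomputable def cyclicLaw (q : X4 → ℝ) {L : ℕ} (x : Fin L → X) : ℝ :=
  marg3 q (cyc x 0, cyc x 1, cyc x 2) *
    ∏ i ∈ Finset.range L,
      condProb q (cyc x i, cyc x (i+1), cyc x (i+2)) (cyc x (i+3))

open scoped Classical in
/-- Probability, under `P_q^{(L)}`, that the type of the sample lies in `F`. -/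
noncomputable def probTypeIn (q : X4 → ℝ) (L : ℕ) (F : Set (X4 → ℝ)) : ℝ :=
  ∑ x : Fin L → X, if empDist x ∈ F then markovLaw q x else 0

/-- Contig length `L_N = ⌈L̄ log₂ N⌉`. -/
noncomputable def LN (Lbar : ℝ) (N : ℕ) : ℕ := ⌈Lbar * Real.logb 2 N⌉₊

open scoped Classical in
/-- Probability of an event `E` for `N` i.i.d. pairs `(Kᵢ, Xᵢ)` where `Kᵢ` is uniform on
`{1,…,M}` and, given `Kᵢ = k`, `Xᵢ ∼ P_{p_k}^{(L)}`. -/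
noncomputable def probEvent (M : ℕ) (p : Fin M → X4 → ℝ) (N L : ℕ)
    (E : (Fin N → Fin M × (Fin L → X)) → Prop) : ℝ :=
  ∑ ω : Fin N → Fin M × (Fin L → X),
    (∏ i, (1 / (M : ℝ)) * markovLaw (p (ω i).1) (ω i).2) * (if E ω then 1 else 0)

/-- Probability of the error event
`ℰ_δ = {∃ i j, K_i ≠ K_j ∧ δ(X_i) = δ(X_j)}` for a decision rule `δ`. -/
noncomputable def errProb (M : ℕ) (p : Fin M → X4 → ℝ) (N L : ℕ)
    (δ : (Fin L → X) → Fin M) : ℝ :=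
  probEvent M p N L (fun ω => ∃ i j, (ω i).1 ≠ (ω j).1 ∧ δ (ω i).2 = δ (ω j).2)

/-- `C_min = min_{k≠ℓ} C(p_k, p_ℓ)`. -/
noncomputable def Cmin (M : ℕ) (p : Fin M → X4 → ℝ) : ℝ :=
  sInf {c : ℝ | ∃ k ℓ : Fin M, k ≠ ℓ ∧ c = Chernoff (p k) (p ℓ)}

/-- Resolvability: some sequence of decision rules has vanishing error probability. -/
def Resolvable (M : ℕ) (p : Fin M → X4 → ℝ) (Lbar : ℝ) : Prop :=
  ∃ δ : (N : ℕ) → (Fin (LN Lbar N) → X) → Fin M,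
    Filter.Tendsto (fun N => errProb M p N (LN Lbar N) (δ N)) Filter.atTop (nhds 0)

/-! A summand `p(ab) log₂ (p(b|a)/q(b|a))` of `D_c(p‖q)` is the perspective `y f(x/y)` of
`f u = u log₂ u` at `x = p(ab)`, `y = p(a) q(b|a)`, and `p ↦ (p(ab), p(a))` is linear.
Perspectives of convex functions are jointly convex, strictly so away from the ray
`x₁/y₁ = x₂/y₂`, so `D_c(·‖q)` is convex and the inequality is strict as soon as some conditional
`p(b|a)` differs. Conditionals do differ when `p_a ≠ p_b`: by consistency both third-order
marginals are stationary for the same positive transition kernel `a ↦ a₂a₃b`, and a maximum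
principle for the ratio `p_a(a)/p_b(a)`, propagated along three steps of the kernel to all of
`𝒳³`, forces `p_a = p_b`. -/

open Real Set

theorem strictConvexOn_mul_logb {b : ℝ} (hb : 1 < b) :
    StrictConvexOn ℝ (Ici 0) (fun x ↦ x * logb b x) := by
  refine ⟨convex_Ici 0, fun x hx y hy hxy u v hu hv huv ↦ ?_⟩
  have h := strictConvexOn_mul_log.2 hx hy hxy hu hv huv
  simp only [smul_eq_mul, logb, ← mul_div_assoc, ← add_div] at h ⊢
  exact div_lt_div_of_pos_right h (log_pos hb)

section Perspective

noncomputable def perspective (f : ℝ → ℝ) (x y : ℝ) : ℝ := y * f (x / y)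

variable {s : Set ℝ} {f : ℝ → ℝ} {x₁ x₂ y₁ y₂ a b : ℝ}

private lemma perspective_weights (hy₁ : 0 < y₁) (hy₂ : 0 < y₂) (hY : 0 < a * y₁ + b * y₂) :
    a * y₁ / (a * y₁ + b * y₂) + b * y₂ / (a * y₁ + b * y₂) = 1 ∧
    (a * x₁ + b * x₂) / (a * y₁ + b * y₂) =
      a * y₁ / (a * y₁ + b * y₂) * (x₁ / y₁) + b * y₂ / (a * y₁ + b * y₂) * (x₂ / y₂) := by
  constructor <;> field_simp

theorem ConvexOn.perspective_le (hf : ConvexOn ℝ s f) (hy₁ : 0 < y₁) (hy₂ : 0 < y₂)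
    (hx₁ : x₁ / y₁ ∈ s) (hx₂ : x₂ / y₂ ∈ s) (ha : 0 ≤ a) (hb : 0 ≤ b) (hab : a + b = 1) :
    perspective f (a * x₁ + b * x₂) (a * y₁ + b * y₂) ≤
      a * perspective f x₁ y₁ + b * perspective f x₂ y₂ := by
  unfold perspective
  have hY : 0 < a * y₁ + b * y₂ := by
    simpa only [smul_eq_mul, Set.mem_Ioi] using convex_Ioi (0 : ℝ) hy₁ hy₂ ha hb hab
  obtain ⟨hsum, hx⟩ := perspective_weights (x₁ := x₁) (x₂ := x₂) hy₁ hy₂ hY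
  have h := hf.2 hx₁ hx₂ (by positivity) (by positivity) hsum
  simp only [smul_eq_mul, ← hx] at h
  calc _ ≤ (a * y₁ + b * y₂) * _ := mul_le_mul_of_nonneg_left h hY.le
    _ = _ := by field_simp

theorem StrictConvexOn.perspective_lt (hf : StrictConvexOn ℝ s f) (hy₁ : 0 < y₁) (hy₂ : 0 < y₂)
    (hx₁ : x₁ / y₁ ∈ s) (hx₂ : x₂ / y₂ ∈ s) (hne : x₁ / y₁ ≠ x₂ / y₂) (ha : 0 < a) (hb : 0 < b) :
    perspective f (a * x₁ + b * x₂) (a * y₁ + b * y₂) <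
      a * perspective f x₁ y₁ + b * perspective f x₂ y₂ := by
  unfold perspective
  have hY : 0 < a * y₁ + b * y₂ := by positivity
  obtain ⟨hsum, hx⟩ := perspective_weights (x₁ := x₁) (x₂ := x₂) hy₁ hy₂ hY
  have h := hf.2 hx₁ hx₂ hne (by positivity) (by positivity) hsum
  simp only [smul_eq_mul, ← hx] at h
  calc _ < (a * y₁ + b * y₂) * _ := mul_lt_mul_of_pos_left h hY
    _ = _ := by field_simp

end Perspective

section Distributions

variable {p pa pb q : X4 → ℝ}

@[simp]
theorem marg3_add (a : X3) : marg3 (p + q) a = marg3 p a + marg3 q a :=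
  Finset.sum_add_distrib

@[simp]
theorem marg3_smul (c : ℝ) (a : X3) : marg3 (c • p) a = c * marg3 p a :=
  (Finset.mul_sum _ _ _).symm

theorem marg3_pos (hp : ∀ c, 0 < p c) (a : X3) : 0 < marg3 p a :=
  Finset.sum_pos (fun _ _ ↦ hp _) Finset.univ_nonempty

theorem condProb_pos (hp : ∀ c, 0 < p c) (a : X3) (b : X) : 0 < condProb p a b :=
  div_pos (hp _) (marg3_pos hp a)

theorem marg3_mul_condProb (hp : ∀ c, 0 < p c) (a : X3) (b : X) :
    marg3 p a * condProb p a b = p (appX a b) :=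
  mul_div_cancel₀ _ (marg3_pos hp a).ne'

theorem MemP.marg3_eq_sum (hp : MemP p) (a : X3) :
    marg3 p a = ∑ b, marg3 p (b, a.1, a.2.1) * condProb p (b, a.1, a.2.1) a.2.2 := by
  simp only [marg3_mul_condProb hp.pos]
  exact hp.consistent a

theorem MemP.marg3_pred_eq_mul_of_le (ha : MemP pa) (hb : MemP pb) (h : condProb pa = condProb pb)
    {M : ℝ} (hM : ∀ a, marg3 pa a ≤ M * marg3 pb a) {a : X3} (hMa : marg3 pa a = M * marg3 pb a)
    (b : X) : marg3 pa (b, a.1, a.2.1) = M * marg3 pb (b, a.1, a.2.1) := by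
  set K := fun c : X ↦ condProb pb (c, a.1, a.2.1) a.2.2
  have hsum : ∑ c, marg3 pa (c, a.1, a.2.1) * K c = ∑ c, M * marg3 pb (c, a.1, a.2.1) * K c := by
    simp only [K, ← h, ← ha.marg3_eq_sum, mul_assoc, ← Finset.mul_sum, hMa]
    rw [h, ← hb.marg3_eq_sum]
  have hle : ∀ c ∈ Finset.univ,
      marg3 pa (c, a.1, a.2.1) * K c ≤ M * marg3 pb (c, a.1, a.2.1) * K c :=
    fun c _ ↦ mul_le_mul_of_nonneg_right (hM _) (condProb_pos hb.pos _ _).le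
  exact mul_right_cancel₀ (condProb_pos hb.pos _ _).ne'
    ((Finset.sum_eq_sum_iff_of_le hle).1 hsum b (Finset.mem_univ b))

theorem MemP.exists_marg3_eq_mul (ha : MemP pa) (hb : MemP pb) (h : condProb pa = condProb pb) :
    ∃ M, ∀ a, marg3 pa a = M * marg3 pb a := by
  obtain ⟨a₀, -, hmax⟩ := Finset.exists_max_image Finset.univ
    (fun a ↦ marg3 pa a / marg3 pb a) Finset.univ_nonempty
  set M := marg3 pa a₀ / marg3 pb a₀
  have hM : ∀ a, marg3 pa a ≤ M * marg3 pb a := fun a ↦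
    (div_le_iff₀ (marg3_pos hb.pos a)).1 (hmax a (Finset.mem_univ a))
  have step := fun a ↦ ha.marg3_pred_eq_mul_of_le hb h hM (a := a)
  have h₀ : marg3 pa a₀ = M * marg3 pb a₀ := (div_mul_cancel₀ _ (marg3_pos hb.pos a₀).ne').symm
  exact ⟨M, fun ⟨a₁, a₂, a₃⟩ ↦ step _ (step _ (step _ h₀ a₃) a₂) a₁⟩

theorem MemP.eq_of_condProb_eq (ha : MemP pa) (hb : MemP pb) (h : condProb pa = condProb pb) :
    pa = pb := by
  obtain ⟨M, hM⟩ := ha.exists_marg3_eq_mul hb h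
  have hpa : ∀ x, pa x = M * pb x := fun ⟨x₁, x₂, x₃, x₄⟩ ↦ by
    change pa (appX (x₁, x₂, x₃) x₄) = M * pb (appX (x₁, x₂, x₃) x₄)
    rw [← marg3_mul_condProb ha.pos, ← marg3_mul_condProb hb.pos, hM, h, mul_assoc]
  have hM1 : M = 1 := by
    simpa only [hpa, ← Finset.mul_sum, ha.sum_one, hb.sum_one, mul_one, eq_comm] using ha.sum_one
  funext x
  rw [hpa, hM1, one_mul]

end Distributions

section Summand

variable {pa pb p q : X4 → ℝ} {t : ℝ}

noncomputable def dcSummand (p q : X4 → ℝ) (a : X3) (b : X) : ℝ :=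
  p (appX a b) * logb 2 (condProb p a b / condProb q a b)

theorem Dc_eq_sum_dcSummand : Dc p q = ∑ a, ∑ b, dcSummand p q a b := rfl

theorem dcSummand_eq_perspective (hp : ∀ c, 0 < p c) (hq : ∀ c, 0 < q c) (a : X3) (b : X) :
    dcSummand p q a b =
      perspective (fun u ↦ u * logb 2 u) (p (appX a b)) (marg3 p a * condProb q a b) := by
  have hy : marg3 p a * condProb q a b ≠ 0 := (mul_pos (marg3_pos hp a) (condProb_pos hq a b)).ne'
  rw [dcSummand, perspective, condProb, div_div, ← mul_assoc, mul_div_cancel₀ _ hy]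

theorem dcSummand_mix_eq (hpa : ∀ c, 0 < pa c) (hpb : ∀ c, 0 < pb c) (hq : ∀ c, 0 < q c)
    (ht₀ : 0 ≤ t) (ht₁ : t ≤ 1) (a : X3) (b : X) :
    dcSummand (t • pa + (1 - t) • pb) q a b =
      perspective (fun u ↦ u * logb 2 u) (t * pa (appX a b) + (1 - t) * pb (appX a b))
        (t * (marg3 pa a * condProb q a b) + (1 - t) * (marg3 pb a * condProb q a b)) := by
  have hmix : ∀ c, 0 < (t • pa + (1 - t) • pb) c := fun c ↦
    convex_Ioi (0 : ℝ) (hpa c) (hpb c) ht₀ (sub_nonneg.2 ht₁) (add_sub_cancel t 1)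
  have hy : marg3 (t • pa + (1 - t) • pb) a * condProb q a b =
      t * (marg3 pa a * condProb q a b) + (1 - t) * (marg3 pb a * condProb q a b) := by
    simp only [marg3_add, marg3_smul]
    ring
  rw [dcSummand_eq_perspective hmix hq, hy]
  rfl

theorem dcSummand_mix_le (hpa : ∀ c, 0 < pa c) (hpb : ∀ c, 0 < pb c) (hq : ∀ c, 0 < q c)
    (ht₀ : 0 ≤ t) (ht₁ : t ≤ 1) (a : X3) (b : X) :
    dcSummand (t • pa + (1 - t) • pb) q a b ≤
      t * dcSummand pa q a b + (1 - t) * dcSummand pb q a b := by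
  rw [dcSummand_mix_eq hpa hpb hq ht₀ ht₁, dcSummand_eq_perspective hpa hq,
    dcSummand_eq_perspective hpb hq]
  have hy₁ := mul_pos (marg3_pos hpa a) (condProb_pos hq a b)
  have hy₂ := mul_pos (marg3_pos hpb a) (condProb_pos hq a b)
  exact (strictConvexOn_mul_logb one_lt_two).convexOn.perspective_le hy₁ hy₂
    (div_pos (hpa _) hy₁).le (div_pos (hpb _) hy₂).le ht₀ (sub_nonneg.2 ht₁)
    (add_sub_cancel t 1)

theorem dcSummand_mix_lt (hpa : ∀ c, 0 < pa c) (hpb : ∀ c, 0 < pb c) (hq : ∀ c, 0 < q c)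
    (ht₀ : 0 < t) (ht₁ : t < 1) {a : X3} {b : X} (hne : condProb pa a b ≠ condProb pb a b) :
    dcSummand (t • pa + (1 - t) • pb) q a b <
      t * dcSummand pa q a b + (1 - t) * dcSummand pb q a b := by
  rw [dcSummand_mix_eq hpa hpb hq ht₀.le ht₁.le, dcSummand_eq_perspective hpa hq,
    dcSummand_eq_perspective hpb hq]
  have hqab := condProb_pos hq a b
  have hy₁ := mul_pos (marg3_pos hpa a) hqab
  have hy₂ := mul_pos (marg3_pos hpb a) hqab
  have hne' : pa (appX a b) / (marg3 pa a * condProb q a b) ≠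
      pb (appX a b) / (marg3 pb a * condProb q a b) := by
    rwa [← div_div, ← div_div, Ne, div_left_inj' hqab.ne']
  exact (strictConvexOn_mul_logb one_lt_two).perspective_lt hy₁ hy₂
    (div_pos (hpa _) hy₁).le (div_pos (hpb _) hy₂).le hne' ht₀ (sub_pos.2 ht₁)

end Summand

/-- the conditional relative entropy is strictly convex in its first
argument: for `p_a ≠ p_b` in `𝒫̃` and `λ ∈ (0,1)`,
`D_c(λp_a + (1−λ)p_b ‖ q) < λD_c(p_a‖q) + (1−λ)D_c(p_b‖q)`. -/
theorem Dc_strictly_convex (pa pb q : X4 → ℝ) (ha : MemP pa) (hb : MemP pb)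
    (hq : MemP q) (hne : pa ≠ pb) (t : ℝ) (ht : t ∈ Set.Ioo (0:ℝ) 1) :
    Dc (t • pa + (1 - t) • pb) q < t * Dc pa q + (1 - t) * Dc pb q := by
  obtain ⟨ht₀, ht₁⟩ := ht
  obtain ⟨a₀, b₀, hab⟩ : ∃ a b, condProb pa a b ≠ condProb pb a b := by
    by_contra! h
    exact hne (ha.eq_of_condProb_eq hb (funext₂ h))
  have hle := dcSummand_mix_le ha.pos hb.pos hq.pos ht₀.le ht₁.le
  simp only [Dc_eq_sum_dcSummand, Finset.mul_sum, ← Finset.sum_add_distrib]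
  refine Finset.sum_lt_sum (fun a _ ↦ Finset.sum_le_sum fun b _ ↦ hle a b)
    ⟨a₀, Finset.mem_univ _, Finset.sum_lt_sum (fun b _ ↦ hle a₀ b) ⟨b₀, Finset.mem_univ _, ?_⟩⟩
  exact dcSummand_mix_lt ha.pos hb.pos hq.pos ht₀ ht₁ hab
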